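/- arXiv:1001.3528 — 2 statements merged into one kernel-verified Lean document; each statement's English description precedes it below -/
import Mathlib

section
/- Let m ≥ 1 and let α₁, …, α_m ∈ (0, π) satisfy ∑_{j=1}^m (π − α_j) = 2π. Let r₀, r₁, …, r_m > 0 satisfy ∑_{j=1}^m f_{α_j}(log r_j − log r₀) = π. Then ∑_{j=1}^m f_{α_j}(log(1/r_j) − log(1/r₀)) = π, i.e. ∑_{j=1}^m f_{α_j}(log r₀ − log r_j) = π. (This is the analytic content of the lemma that if an isoradial circle pattern exists for a graph G and labelling α and r is the radius function of a circle pattern for G and α, then 1/r is again the radius function of a circle pattern for G and α.) -/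
/-!
With `z = 1 - e^{x+iθ}` and `w = 1 - e^{-x+iθ}` one has
`z * w = (2 cosh x - 2 cos θ) e^{i(θ - π)}`, a number of argument `θ - π`. Both factors lie in the
lower half-plane and so does their product, hence no branch jump occurs and
`f_θ(x) + f_θ(-x) = π - θ`. Summing this over the flower and using `∑ (π - α_j) = 2π` turns the
closing condition for `r` into the closing condition for `1/r`.
-/

/-- The function `f_θ(x) = −arg(1 − exp(x + iθ))`, realizing the paper's
`f_θ(x) = (1/(2i))·log((1 − e^{x−iθ})/(1 − e^{x+iθ}))` with the branch of the
logarithm chosen so that `0 < f_θ < π`. -/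
noncomputable def fAngle (θ x : ℝ) : ℝ :=
  -Complex.arg (1 - Complex.exp (x + θ * Complex.I))

open Complex Real

theorem Complex.arg_mul_of_im_neg {z w : ℂ} (hz : z.im < 0) (hw : w.im < 0)
    (hzw : (z * w).im < 0) : arg (z * w) = arg z + arg w := by
  have hz₀ : z ≠ 0 := fun h => by simp [h] at hz
  have hw₀ : w ≠ 0 := fun h => by simp [h] at hw
  refine arg_mul hz₀ hw₀ ⟨?_, by linarith [arg_neg_iff.2 hz, arg_neg_iff.2 hw, pi_pos]⟩
  -- a sum of arguments in `(-2π, -π]` would put `z * w` in the closed upper half-plane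
  by_contra! hle
  have hsin : 0 ≤ Real.sin (arg z + arg w) := by
    rw [← Real.sin_add_two_pi]
    apply Real.sin_nonneg_of_nonneg_of_le_pi <;> linarith [neg_pi_lt_arg z, neg_pi_lt_arg w]
  have him : (z * w).im = ‖z‖ * ‖w‖ * Real.sin (arg z + arg w) := by
    rw [Real.sin_add, mul_im, ← norm_mul_cos_arg z, ← norm_mul_sin_arg z,
      ← norm_mul_cos_arg w, ← norm_mul_sin_arg w]
    ring
  have : 0 ≤ (z * w).im := by rw [him]; positivity
  linarith

theorem im_one_sub_exp_add_mul_I (x θ : ℝ) :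
    (1 - exp (x + θ * I)).im = -(Real.exp x * Real.sin θ) := by
  simp [exp_im]

theorem one_sub_exp_mul_one_sub_exp_neg (x θ : ℝ) :
    (1 - exp (x + θ * I)) * (1 - exp (-x + θ * I)) =
      ((2 * Real.cosh x - 2 * Real.cos θ : ℝ) : ℂ) * exp ((θ - π : ℝ) * I) := by
  push_cast
  rw [Complex.cosh, Complex.cos, sub_mul (θ : ℂ), Complex.exp_sub, exp_pi_mul_I,
    Complex.exp_add, Complex.exp_add, Complex.exp_neg, neg_mul, Complex.exp_neg]
  field_simp
  ring

theorem fAngle_add_fAngle_neg {θ : ℝ} (h₀ : 0 < θ) (hπ : θ < π) (x : ℝ) :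
    fAngle θ x + fAngle θ (-x) = π - θ := by
  have hsin : 0 < Real.sin θ := sin_pos_of_pos_of_lt_pi h₀ hπ
  have hcos : Real.cos θ < 1 := by
    simpa using cos_lt_cos_of_nonneg_of_le_pi le_rfl hπ.le h₀
  have hc : 0 < 2 * Real.cosh x - 2 * Real.cos θ := by linarith [one_le_cosh x]
  have harg : arg ((1 - exp (x + θ * I)) * (1 - exp (-x + θ * I))) = θ - π := by
    rw [one_sub_exp_mul_one_sub_exp_neg, arg_real_mul _ hc, exp_mul_I,
      arg_cos_add_sin_mul_I ⟨by linarith, by linarith⟩]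
  have hz : (1 - exp (x + θ * I)).im < 0 := by
    rw [im_one_sub_exp_add_mul_I]; nlinarith [Real.exp_pos x]
  have hw : (1 - exp (-x + θ * I)).im < 0 := by
    rw [← ofReal_neg, im_one_sub_exp_add_mul_I]; nlinarith [Real.exp_pos (-x)]
  have hzw : ((1 - exp (x + θ * I)) * (1 - exp (-x + θ * I))).im < 0 :=
    arg_neg_iff.1 (by rw [harg]; linarith)
  rw [arg_mul_of_im_neg hz hw hzw] at harg
  unfold fAngle
  push_cast
  linarith

theorem inverse_radius_closing_condition_general (m : ℕ)
    (α : Fin m → ℝ) (hα : ∀ j, 0 < α j ∧ α j < Real.pi)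
    (hsum : ∑ j, (Real.pi - α j) = 2 * Real.pi)
    (r₀ : ℝ) (r : Fin m → ℝ)
    (hclose : ∑ j, fAngle (α j) (Real.log (r j) - Real.log r₀) = Real.pi) :
    ∑ j, fAngle (α j) (Real.log r₀ - Real.log (r j)) = Real.pi := by
  have hflip : ∀ j, fAngle (α j) (Real.log r₀ - Real.log (r j)) =
      (π - α j) - fAngle (α j) (Real.log (r j) - Real.log r₀) := fun j => by
    rw [← neg_sub, eq_sub_iff_add_eq', fAngle_add_fAngle_neg (hα j).1 (hα j).2]
  rw [Finset.sum_congr rfl fun j _ => hflip j, Finset.sum_sub_distrib, hsum, hclose]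
  ring

theorem inverse_radius_closing_condition (m : ℕ) (hm : 1 ≤ m)
    (α : Fin m → ℝ) (hα : ∀ j, 0 < α j ∧ α j < Real.pi)
    (hsum : ∑ j, (Real.pi - α j) = 2 * Real.pi)
    (r₀ : ℝ) (hr₀ : 0 < r₀) (r : Fin m → ℝ) (hr : ∀ j, 0 < r j)
    (hclose : ∑ j, fAngle (α j) (Real.log (r j) - Real.log r₀) = Real.pi) :
    ∑ j, fAngle (α j) (Real.log r₀ - Real.log (r j)) = Real.pi :=
  inverse_radius_closing_condition_general m α hα hsum r₀ r hclose
end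

section
/- Let r₀, r₁, r₂, r₃, r₄ > 0 and ρ₀, ρ₁, ρ₂, ρ₃, ρ₄ > 0 satisfy ∑_{j=1}^4 arctan(r_j/r₀) = π and ∑_{j=1}^4 arctan(ρ_j/ρ₀) = π (the closing conditions for two orthogonal circle patterns for SG(1,0), a central circle orthogonally intersected by four neighbors). Set c_j = ((ρ_j/ρ₀) + (ρ₀/ρ_j))⁻¹ for j = 1, …, 4. Then ∑_{j=1}^4 c_j·(r_j/ρ_j) ≥ (r₀/ρ₀)·∑_{j=1}^4 c_j and ∑_{j=1}^4 c_j·(ρ_j/r_j) ≥ (ρ₀/r₀)·∑_{j=1}^4 c_j. (Thus the quotient of the radius functions of two orthogonal SG-circle patterns is subharmonic with respect to the conductances c_j.) -/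
/-!
`arctan` is concave on `[0, ∞)` with derivative `1 / (1 + y²)`, so with `x_j = r_j / r₀` and
`y_j = ρ_j / ρ₀` the tangent lines give `arctan x_j ≤ arctan y_j + (x_j - y_j) / (1 + y_j²)`.
Summing and using the two closing conditions, `∑ (x_j - y_j) / (1 + y_j²) ≥ 0`; since
`(x_j - y_j) / (1 + y_j²) = c_j (x_j / y_j - 1)`, this is the first inequality up to the factor
`r₀ / ρ₀`. As `arctan t⁻¹ = π / 2 - arctan t`, inverting all radii preserves both closing
conditions and the conductances, and turns the first inequality into the second.
-/

open Real Set Finset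

theorem ConcaveOn.le_add_mul_sub_of_hasDerivAt {S : Set ℝ} {f : ℝ → ℝ} {f' x y : ℝ}
    (hf : ConcaveOn ℝ S f) (hx : x ∈ S) (hy : y ∈ S) (hf' : HasDerivAt f f' y) :
    f x ≤ f y + f' * (x - y) := by
  rcases lt_trichotomy x y with hxy | rfl | hyx
  · have hslope := hf.le_slope_of_hasDerivAt hx hy hxy hf'
    rw [slope_def_field, le_div_iff₀ (sub_pos.mpr hxy)] at hslope
    linarith
  · simp
  · have hslope := hf.slope_le_of_hasDerivAt hy hx hyx hf'
    rw [slope_def_field, div_le_iff₀ (sub_pos.mpr hyx)] at hslope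
    linarith

namespace Real

theorem concaveOn_arctan_Ici : ConcaveOn ℝ (Ici 0) arctan := by
  refine AntitoneOn.concaveOn_of_deriv (convex_Ici 0) continuous_arctan.continuousOn
    differentiable_arctan.differentiableOn ?_
  rw [interior_Ici, deriv_arctan]
  intro s hs t _ hst
  dsimp only
  gcongr
  exact hs.le

theorem arctan_le_arctan_add_sub_div {x y : ℝ} (hx : 0 ≤ x) (hy : 0 ≤ y) :
    arctan x ≤ arctan y + (x - y) / (1 + y ^ 2) := by
  simpa only [div_mul_eq_mul_div, one_mul] using
    concaveOn_arctan_Ici.le_add_mul_sub_of_hasDerivAt hx hy (hasDerivAt_arctan y)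

theorem sum_arctan_inv {ι : Type*} (s : Finset ι) {x : ι → ℝ} (hx : ∀ i ∈ s, 0 < x i) :
    ∑ i ∈ s, arctan (x i)⁻¹ = #s * (π / 2) - ∑ i ∈ s, arctan (x i) := by
  rw [sum_congr rfl fun i hi => arctan_inv_of_pos (hx i hi), sum_sub_distrib, sum_const,
    nsmul_eq_mul]

end Real

theorem mul_sum_le_sum_mul_div_of_sum_arctan_eq {ι : Type*} {s : Finset ι} {a b : ι → ℝ}
    {a₀ b₀ : ℝ} (ha : ∀ i ∈ s, 0 ≤ a i) (hb : ∀ i ∈ s, 0 < b i) (ha₀ : 0 < a₀) (hb₀ : 0 < b₀)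
    (h : ∑ i ∈ s, arctan (a i / a₀) = ∑ i ∈ s, arctan (b i / b₀)) :
    a₀ / b₀ * ∑ i ∈ s, (b i / b₀ + b₀ / b i)⁻¹ ≤
      ∑ i ∈ s, (b i / b₀ + b₀ / b i)⁻¹ * (a i / b i) := by
  have htangent : ∑ i ∈ s, arctan (a i / a₀) ≤
      ∑ i ∈ s, (arctan (b i / b₀) + (a i / a₀ - b i / b₀) / (1 + (b i / b₀) ^ 2)) :=
    sum_le_sum fun i hi =>
      arctan_le_arctan_add_sub_div (div_nonneg (ha i hi) ha₀.le) (div_nonneg (hb i hi).le hb₀.le)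
  rw [sum_add_distrib, h, le_add_iff_nonneg_right] at htangent
  have hterm : ∀ i ∈ s, (b i / b₀ + b₀ / b i)⁻¹ * (a i / b i) - a₀ / b₀ * (b i / b₀ + b₀ / b i)⁻¹
      = a₀ / b₀ * ((a i / a₀ - b i / b₀) / (1 + (b i / b₀) ^ 2)) := by
    intro i hi
    have hbi : b i ≠ 0 := (hb i hi).ne'
    field_simp
    ring
  rw [← sub_nonneg, mul_sum, ← sum_sub_distrib, sum_congr rfl hterm, ← mul_sum]
  exact mul_nonneg (div_pos ha₀ hb₀).le htangent

theorem orthogonal_subharmonicity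
    (r ρ : Fin 4 → ℝ) (r₀ ρ₀ : ℝ)
    (hr₀ : 0 < r₀) (hρ₀ : 0 < ρ₀) (hr : ∀ j, 0 < r j) (hρ : ∀ j, 0 < ρ j)
    (hcloser : ∑ j, Real.arctan (r j / r₀) = Real.pi)
    (hcloseρ : ∑ j, Real.arctan (ρ j / ρ₀) = Real.pi)
    (c : Fin 4 → ℝ) (hc : ∀ j, c j = (ρ j / ρ₀ + ρ₀ / ρ j)⁻¹) :
    (∑ j, c j * (r j / ρ j) ≥ r₀ / ρ₀ * ∑ j, c j) ∧
    (∑ j, c j * (ρ j / r j) ≥ ρ₀ / r₀ * ∑ j, c j) := by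
  simp only [hc, ge_iff_le]
  constructor
  · exact mul_sum_le_sum_mul_div_of_sum_arctan_eq (fun j _ => (hr j).le) (fun j _ => hρ j)
      hr₀ hρ₀ (hcloser.trans hcloseρ.symm)
  · have hclose_inv : ∑ j, arctan ((r j)⁻¹ / r₀⁻¹) = ∑ j, arctan ((ρ j)⁻¹ / ρ₀⁻¹) := by
      simp only [inv_div_inv]
      simp only [← inv_div (r _), ← inv_div (ρ _)]
      rw [sum_arctan_inv _ fun j _ => div_pos (hr j) hr₀,
        sum_arctan_inv _ fun j _ => div_pos (hρ j) hρ₀, hcloser, hcloseρ]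
    have := mul_sum_le_sum_mul_div_of_sum_arctan_eq (fun j _ => (inv_pos.mpr (hr j)).le)
      (fun j _ => inv_pos.mpr (hρ j)) (inv_pos.mpr hr₀) (inv_pos.mpr hρ₀) hclose_inv
    simpa only [inv_div_inv, add_comm (ρ₀ / ρ _)] using this
end
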